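/- arXiv:1405.5024 — 6 statements merged into one kernel-verified Lean document; each statement's English description precedes it below -/
import Mathlib

section
/- For every bijection G : A → {1,...,m} satisfying G(w) < G(w') whenever P(W=w) > P(W=w'), and for every n ∈ {1,...,m}, P(G(W) ≤ n) equals the maximum of ∑_{i=1}^n P(W = w_i) over all choices of n distinct elements w_1,...,w_n of A. -/
/-! The first `n` guesses of a most-likely-first strategy form a set `S` that dominates its
complement: every string outside `S` is at most as likely as every string in `S`. For any `T`
with `#T = #S`, the parts `T \ S` and `S \ T` have the same size, so pairing them off by any
bijection shows that trading `S \ T` for `T \ S` cannot increase the total probability. -/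

open Finset

namespace Finset

variable {ι M : Type*} [AddCommMonoid M] [PartialOrder M] [IsOrderedAddMonoid M]
  {s t : Finset ι} {f : ι → M}

theorem sum_le_sum_of_card_eq_of_forall_le (hst : #s = #t)
    (h : ∀ a ∈ s, ∀ b ∈ t, f a ≤ f b) : ∑ a ∈ s, f a ≤ ∑ b ∈ t, f b := by
  let e := s.equivOfCardEq hst
  calc ∑ a ∈ s, f a = ∑ a : s, f a := (sum_coe_sort s f).symm
    _ ≤ ∑ a : s, f (e a) := sum_le_sum fun a _ => h a a.2 (e a) (e a).2
    _ = ∑ b ∈ t, f b := by rw [e.sum_comp (fun b => f b), sum_coe_sort]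

theorem sum_le_sum_of_card_eq_of_forall_notMem_le [DecidableEq ι] (hts : #t = #s)
    (h : ∀ a ∉ s, ∀ b ∈ s, f a ≤ f b) : ∑ a ∈ t, f a ≤ ∑ b ∈ s, f b := by
  have hsdiff : ∑ a ∈ t \ s, f a ≤ ∑ b ∈ s \ t, f b :=
    sum_le_sum_of_card_eq_of_forall_le (card_sdiff_comm hts)
      fun a ha b hb => h a (mem_sdiff.1 ha).2 b (mem_sdiff.1 hb).1
  calc ∑ a ∈ t, f a = ∑ a ∈ s ∩ t, f a + ∑ a ∈ t \ s, f a := by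
        rw [inter_comm, sum_inter_add_sum_sdiff]
    _ ≤ ∑ a ∈ s ∩ t, f a + ∑ b ∈ s \ t, f b := add_le_add_right hsdiff _
    _ = ∑ b ∈ s, f b := sum_inter_add_sum_sdiff s t f

end Finset

theorem most_likely_first_cdf_is_max_general
    {A : Type*} [Fintype A] {m : ℕ}
    (p : A → ℝ)
    (G : A ≃ Fin m) (hG : ∀ w w', p w > p w' → G w < G w')
    (n : ℕ) (hnm : n ≤ m) :
    IsGreatest ((fun T : Finset A => ∑ w ∈ T, p w) ''
        {T : Finset A | T.card = n})
      (∑ w ∈ Finset.univ.filter (fun w => (G w : ℕ) < n), p w) := by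
  classical
  set S := Finset.univ.filter (fun w => (G w : ℕ) < n)
  have hS : #S = n := by
    rw [card_equiv G (t := {i : Fin m | (i : ℕ) < n}) (by simp [S]), Fin.card_filter_val_lt]
    exact min_eq_right hnm
  refine ⟨⟨S, hS, rfl⟩, ?_⟩
  rintro _ ⟨T, hT, rfl⟩
  refine sum_le_sum_of_card_eq_of_forall_notMem_le (hT.trans hS.symm) fun w hw w' hw' => ?_
  simp only [S, mem_filter, mem_univ, true_and, not_lt] at hw hw'
  by_contra! hlt
  have := Fin.lt_def.1 (hG w w' hlt)
  omega

/-- For a most-likely-first strategy `G`, the probability of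
identification within `n` guesses is the greatest possible total probability
of any set of `n` distinct strings. -/
theorem most_likely_first_cdf_is_max
    {A : Type*} [Fintype A] {m : ℕ} (hm : Fintype.card A = m)
    (p : A → ℝ) (hp : ∀ a, 0 ≤ p a) (hsum : ∑ a, p a = 1)
    (G : A ≃ Fin m) (hG : ∀ w w', p w > p w' → G w < G w')
    (n : ℕ) (hn1 : 1 ≤ n) (hnm : n ≤ m) :
    IsGreatest ((fun T : Finset A => ∑ w ∈ T, p w) ''
        {T : Finset A | T.card = n})
      (∑ w ∈ Finset.univ.filter (fun w => (G w : ℕ) < n), p w) :=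
  most_likely_first_cdf_is_max_general p G hG n hnm
end

section
/- There exist a finite alphabet A, an integer V=2 with U=1, and independent A-valued random variables W^(1), W^(2), such that no multi-user strategy S : {1,2} × A → {1,...,2|A|} is stochastically dominant: for every strategy S there exists another strategy S' and an n with P(G_S(1,2,(W^(1),W^(2))) ≤ n) < P(G_{S'}(1,2,(W^(1),W^(2))) ≤ n). Concretely, one may take A = {0,1,2} with P(W^(1)=0)=0.6, P(W^(1)=1)=0.25, P(W^(1)=2)=0.15 and P(W^(2)=0)=0.5, P(W^(2)=1)=0.4, P(W^(2)=2)=0.1. -/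
/-- Probability mass function of user 1's string. -/
noncomputable def p1 : Fin 3 → ℝ := ![0.6, 0.25, 0.15]

/-- Probability mass function of user 2's string. -/
noncomputable def p2 : Fin 3 → ℝ := ![0.5, 0.4, 0.1]

/-- `P(G_S(1,2,(W¹,W²)) ≤ n)` for a multi-user strategy
`S : Fin 2 × Fin 3 ≃ Fin 6` with `U = 1`, `V = 2`: the number of guesses made
until the first string is identified is the (1-indexed) position of the
earlier of the two correct (user, string) pairs in the ordering `S`. -/
noncomputable def cdfGS (S : (Fin 2 × Fin 3) ≃ Fin 6) (n : ℕ) : ℝ :=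
  ∑ w : Fin 3 × Fin 3,
    if min ((S (0, w.1)) : ℕ) ((S (1, w.2)) : ℕ) + 1 ≤ n then
      p1 w.1 * p2 w.2 else 0

/-! `P(G ≤ 1)` is largest, `0.6`, only for strategies that first guess `W¹ = 0`. Every such
strategy has `P(G ≤ 2) ≤ 0.85`, since its second guess adds either `P(W¹ = a) ≤ 0.25` or
`0.4 · P(W² = b) ≤ 0.2`, whereas guessing the two likeliest strings of user 2 first gives
`P(G ≤ 2) = 0.9`. -/

open Finset

noncomputable def hitProb (F : Finset (Fin 2 × Fin 3)) : ℝ :=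
  ∑ w : Fin 3 × Fin 3, if (0, w.1) ∈ F ∨ (1, w.2) ∈ F then p1 w.1 * p2 w.2 else 0

lemma filter_apply_lt_one {α : Type*} [Fintype α] {m : ℕ} (S : α ≃ Fin (m + 1)) :
    ({q | (S q : ℕ) < 1} : Finset α) = {S.symm 0} := by
  ext q
  simp only [mem_filter, mem_univ, true_and, mem_singleton, Equiv.eq_symm_apply, Fin.ext_iff,
    Fin.val_zero]
  omega

lemma filter_apply_lt_two {α : Type*} [Fintype α] [DecidableEq α] {m : ℕ}
    (S : α ≃ Fin (m + 2)) :
    ({q | (S q : ℕ) < 2} : Finset α) = {S.symm 0, S.symm 1} := by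
  ext q
  simp only [mem_filter, mem_univ, true_and, mem_insert, mem_singleton, Equiv.eq_symm_apply,
    Fin.ext_iff, Fin.val_zero, Fin.val_one]
  omega

lemma cdfGS_eq_hitProb (S : (Fin 2 × Fin 3) ≃ Fin 6) (n : ℕ) :
    cdfGS S n = hitProb {q | (S q : ℕ) < n} := by
  unfold cdfGS hitProb
  refine sum_congr rfl fun w _ => if_congr ?_ rfl rfl
  simp only [mem_filter, mem_univ, true_and]
  omega

lemma cdfGS_one (S : (Fin 2 × Fin 3) ≃ Fin 6) : cdfGS S 1 = hitProb {S.symm 0} := by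
  rw [cdfGS_eq_hitProb, filter_apply_lt_one]

lemma cdfGS_two (S : (Fin 2 × Fin 3) ≃ Fin 6) :
    cdfGS S 2 = hitProb {S.symm 0, S.symm 1} := by
  rw [cdfGS_eq_hitProb, filter_apply_lt_two]

lemma hitProb_singleton_lt {x : Fin 2 × Fin 3} (hx : x ≠ (0, 0)) : hitProb {x} < 3 / 5 := by
  fin_cases x
  · exact absurd rfl hx
  all_goals norm_num +decide [hitProb, Fintype.sum_prod_type, Fin.sum_univ_succ, p1, p2]

lemma hitProb_pair_lt {y : Fin 2 × Fin 3} (hy : y ≠ (0, 0)) : hitProb {(0, 0), y} < 9 / 10 := by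
  fin_cases y
  · exact absurd rfl hy
  all_goals norm_num +decide [hitProb, Fintype.sum_prod_type, Fin.sum_univ_succ, p1, p2]

def userOneFirst : (Fin 2 × Fin 3) ≃ Fin 6 := finProdFinEquiv

def userTwoFirst : (Fin 2 × Fin 3) ≃ Fin 6 :=
  (Equiv.prodCongr (Equiv.swap 0 1) (Equiv.refl _)).trans finProdFinEquiv

lemma cdfGS_userOneFirst_one : cdfGS userOneFirst 1 = 3 / 5 := by
  rw [cdfGS_one, show userOneFirst.symm 0 = (0, 0) from rfl]
  norm_num +decide [hitProb, Fintype.sum_prod_type, Fin.sum_univ_succ, p1, p2]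

lemma cdfGS_userTwoFirst_two : cdfGS userTwoFirst 2 = 9 / 10 := by
  rw [cdfGS_two, show userTwoFirst.symm 0 = (1, 0) from rfl,
    show userTwoFirst.symm 1 = (1, 1) from rfl]
  norm_num +decide [hitProb, Fintype.sum_prod_type, Fin.sum_univ_succ, p1, p2]

/-- For the concrete pair of sources `p1`, `p2` (with `U = 1`,
`V = 2`), no multi-user strategy is stochastically dominant: for every
strategy `S` there is a strategy `S'` and an `n` with
`P(G_S ≤ n) < P(G_{S'} ≤ n)`. -/
theorem no_stochastically_dominant_multiuser_strategy :
    ∀ S : (Fin 2 × Fin 3) ≃ Fin 6,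
      ∃ (S' : (Fin 2 × Fin 3) ≃ Fin 6) (n : ℕ),
        cdfGS S n < cdfGS S' n := by
  intro S
  by_cases h : S.symm 0 = (0, 0)
  · have hy : S.symm 1 ≠ (0, 0) := h ▸ S.symm.injective.ne (by decide)
    refine ⟨userTwoFirst, 2, ?_⟩
    rw [cdfGS_userTwoFirst_two, cdfGS_two, h]
    exact hitProb_pair_lt hy
  · refine ⟨userOneFirst, 1, ?_⟩
    rw [cdfGS_userOneFirst_one, cdfGS_one]
    exact hitProb_singleton_lt h
end

section
/- Let W^(1),...,W^(V) be independent random variables on a finite set A^k, let G^(v) be an optimal (most-likely-first) strategy for W^(v), and define G_opt(U,V,W) = U-min(G^(1)(W^(1)),...,G^(V)(W^(V))). Then for any multi-user strategy S, G_opt(U,V,W) is stochastically dominated by G_S(U,V,W): P(G_opt(U,V,W) ≤ n) ≥ P(G_S(U,V,W) ≤ n) for all n ∈ {1,...,m^k}. -/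
/-- `uminN U x` : the `U`-th smallest component (1-indexed, with multiplicity)
of the vector of naturals `x : Fin V → ℕ`. -/
def uminN {V : ℕ} (U : ℕ) (x : Fin V → ℕ) : ℕ :=
  ((Finset.univ.val.map x).sort (· ≤ ·)).getD (U - 1) 0

/-- `NS S v n` : the number of queries to user `v` among the first `n`
queries of the multi-user strategy `S` (positions are 1-indexed). -/
def NS {V M : ℕ} {X : Type*} [Fintype X] [DecidableEq X]
    (S : Fin V × X ≃ Fin (V * M)) (v : Fin V) (n : ℕ) : ℕ :=
  (Finset.univ.filter (fun w : X => ((S (v, w)) : ℕ) + 1 ≤ n)).card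

/-- `T S U w` : the number of the query at which the `U`-th string is
identified, i.e. the `U`-th smallest of the (1-indexed) positions of the pairs
`(v, w v)` in the ordering `S`. -/
def TT {V M : ℕ} {X : Type*} [Fintype X] [DecidableEq X]
    (S : Fin V × X ≃ Fin (V * M)) (U : ℕ) (w : Fin V → X) : ℕ :=
  uminN U (fun v => ((S (v, w v)) : ℕ) + 1)

/-- `GS S U w` : the multi-user guesswork of the strategy `S`, the total
number of queries made until `U` of the `V` strings are identified, querying
each user `v` only until its string is found or `U` strings are found. -/
def GS {V M : ℕ} {X : Type*} [Fintype X] [DecidableEq X]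
    (S : Fin V × X ≃ Fin (V * M)) (U : ℕ) (w : Fin V → X) : ℕ :=
  ∑ v : Fin V, NS S v (min (((S (v, w v)) : ℕ) + 1) (TT S U w))

/-- `Gopt Gv U w = U-min(G⁽¹⁾(w⁽¹⁾),...,G⁽ᵛ⁾(w⁽ᵛ⁾))` for single-user
strategies `Gv v` (1-indexed). -/
def Gopt {V M : ℕ} {X : Type*} [Fintype X]
    (Gv : Fin V → (X ≃ Fin M)) (U : ℕ) (w : Fin V → X) : ℕ :=
  uminN U (fun v => ((Gv v (w v)) : ℕ) + 1)

/-!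
A multi-user strategy `S` induces a guessing order for each user: user `v`'s string `w` is
found at its `NS S v (S (v, w) + 1)`-th query to `v`. For each of the first `U` users whose
strings are found, `GS` counts all queries to that user up to its string, so `GS ≤ n` forces at
least `U` of the independent events `{NS S v (S (v, W v) + 1) ≤ n}` to occur. The probability
that at least `U` of independent events occur is monotone in each of their probabilities
(condition on the other coordinates), and each of these events has at most `n` elements, so
its probability is at most that of the `n` most likely strings, `{Gv v < n}`. At least `U` of
the latter occur exactly when `Gopt ≤ n`.
-/

open Finset

theorem List.SortedLE.getElem_le_iff_lt_countP {α : Type*} [LinearOrder α] {l : List α}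
    (hl : l.SortedLE) {i : ℕ} (hi : i < l.length) (b : α) :
    l[i] ≤ b ↔ i < l.countP (· ≤ b) := by
  constructor
  · intro h
    have hle : ∀ x ∈ l.take (i + 1), x ≤ b := by
      intro x hx
      obtain ⟨j, hj, rfl⟩ := List.getElem_of_mem hx
      rw [List.getElem_take]
      exact (hl.getElem_le_getElem_of_le (by simp at hj; omega)).trans h
    calc i < (l.take (i + 1)).length := by simp; omega
      _ = (l.take (i + 1)).countP (· ≤ b) := (List.countP_eq_length.2 (by simpa using hle)).symm
      _ ≤ l.countP (· ≤ b) := (List.take_sublist _ _).countP_le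
  · contrapose!
    intro h
    have hgt : (l.drop i).countP (· ≤ b) = 0 := by
      refine List.countP_eq_zero.2 fun x hx => ?_
      obtain ⟨j, hj, rfl⟩ := List.getElem_of_mem hx
      rw [List.getElem_drop]
      simpa using h.trans_le (hl.getElem_le_getElem_of_le (by omega))
    calc l.countP (· ≤ b) = (l.take i).countP (· ≤ b) + (l.drop i).countP (· ≤ b) := by
          rw [← List.countP_append, List.take_append_drop]
      _ ≤ i := by rw [hgt]; simpa using (List.countP_le_length).trans (List.length_take_le _ _)

theorem uminN_le_iff {V U : ℕ} (hU1 : 1 ≤ U) (hUV : U ≤ V) (x : Fin V → ℕ) (n : ℕ) :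
    uminN U x ≤ n ↔ U ≤ #{v | x v ≤ n} := by
  set l := (univ.val.map x).sort (· ≤ ·)
  have hl : l.length = V := by simp [l]
  have hcount : l.countP (· ≤ n) = #{v | x v ≤ n} := by
    rw [← Multiset.coe_countP, Multiset.sort_eq, Multiset.countP_map]
    rfl
  have hU : U - 1 < l.length := by omega
  rw [uminN, List.getD_eq_getElem _ _ hU,
    (List.sortedLE_iff_pairwise.2 (Multiset.pairwise_sort _ _)).getElem_le_iff_lt_countP hU,
    hcount]
  omega

theorem uminN_NS_le_GS {V M : ℕ} {X : Type*} [Fintype X] [DecidableEq X]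
    (S : Fin V × X ≃ Fin (V * M)) {U : ℕ} (hU1 : 1 ≤ U) (hUV : U ≤ V) (w : Fin V → X) :
    uminN U (fun v => NS S v (S (v, w v) + 1)) ≤ GS S U w := by
  rw [uminN_le_iff hU1 hUV]
  have hT : U ≤ #{v | (S (v, w v) : ℕ) + 1 ≤ TT S U w} := (uminN_le_iff hU1 hUV _ _).1 le_rfl
  refine hT.trans (card_le_card fun v hv => ?_)
  simp only [mem_filter, mem_univ, true_and] at hv ⊢
  calc NS S v (S (v, w v) + 1) = NS S v (min (S (v, w v) + 1) (TT S U w)) := by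
        rw [min_eq_left hv]
    _ ≤ GS S U w := single_le_sum (f := fun v => NS S v (min (S (v, w v) + 1) (TT S U w)))
        (fun _ _ => Nat.zero_le _) (mem_univ v)

theorem Finset.sum_le_sum_of_card_le_of_forall_sdiff_le {α β : Type*} [DecidableEq α]
    [AddCommMonoid β] [LinearOrder β] [IsOrderedAddMonoid β] {A B : Finset α} {f : α → β}
    (hf : ∀ b ∈ B, 0 ≤ f b) (hcard : #A ≤ #B) (hle : ∀ a ∈ A \ B, ∀ b ∈ B \ A, f a ≤ f b) :
    ∑ a ∈ A, f a ≤ ∑ b ∈ B, f b := by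
  rw [← sum_inter_add_sum_sdiff A B, ← sum_inter_add_sum_sdiff B A, inter_comm B A]
  gcongr ∑ x ∈ A ∩ B, f x + ?_
  have hcard' : #(A \ B) ≤ #(B \ A) := by
    have := card_sdiff_add_card_inter A B
    have := card_sdiff_add_card_inter B A
    rw [inter_comm] at this
    omega
  rcases (B \ A).eq_empty_or_nonempty with hBA | hBA
  · have hAB : A \ B = ∅ := card_eq_zero.1 (by simpa [hBA] using hcard')
    simp [hAB, hBA]
  obtain ⟨b₀, hb₀, hmin⟩ := exists_min_image _ f hBA
  calc ∑ a ∈ A \ B, f a ≤ #(A \ B) • f b₀ := sum_le_card_nsmul _ _ _ fun a ha => hle a ha b₀ hb₀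
    _ ≤ #(B \ A) • f b₀ := nsmul_le_nsmul_left (hf b₀ (mem_sdiff.1 hb₀).1) hcard'
    _ ≤ ∑ b ∈ B \ A, f b := card_nsmul_le_sum _ _ _ hmin

theorem sum_le_sum_filter_lt_of_card_le {X : Type*} [Fintype X] [DecidableEq X] {M : ℕ}
    {p : X → ℝ} (hp : ∀ x, 0 ≤ p x) (G : X ≃ Fin M) (hG : ∀ a b, p b < p a → G a < G b)
    {A : Finset X} {n : ℕ} (hA : #A ≤ n) :
    ∑ x ∈ A, p x ≤ ∑ x with (G x : ℕ) < n, p x := by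
  refine sum_le_sum_of_card_le_of_forall_sdiff_le (fun x _ => hp x) ?_ ?_
  · have hB : #{x | (G x : ℕ) < n} = min M n := by
      rw [← Fin.card_filter_val_lt, ← card_map G.toEmbedding, map_filter]
      simp
    have hAM : #A ≤ M := (card_le_univ A).trans_eq ((Fintype.card_congr G).trans (by simp))
    rw [hB]
    omega
  · intro a ha b hb
    simp only [mem_sdiff, mem_filter, mem_univ, true_and] at ha hb
    by_contra! hlt
    have := Fin.lt_def.1 (hG a b hlt)
    omega

theorem card_filter_NS_le {V M : ℕ} {X : Type*} [Fintype X] [DecidableEq X]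
    (S : Fin V × X ≃ Fin (V * M)) (v : Fin V) (n : ℕ) :
    #{a | NS S v (S (v, a) + 1) ≤ n} ≤ n := by
  rcases (univ.filter fun a => NS S v (S (v, a) + 1) ≤ n).eq_empty_or_nonempty with hA | hA
  · simp [hA]
  obtain ⟨a, ha, hmax⟩ := exists_max_image _ (fun a => (S (v, a) : ℕ)) hA
  calc #{a | NS S v (S (v, a) + 1) ≤ n} ≤ #{b | (S (v, b) : ℕ) + 1 ≤ S (v, a) + 1} :=
        card_le_card fun b hb => by simpa using hmax b hb
    _ ≤ n := (mem_filter.1 ha).2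

section probAtLeast

variable {X : Type*} [Fintype X] [DecidableEq X]

def probAtLeast {V : ℕ} (p : Fin V → X → ℝ) (U : ℕ) (A : Fin V → Finset X) : ℝ :=
  ∑ w : Fin V → X with U ≤ #{v | w v ∈ A v}, ∏ v, p v (w v)

theorem probAtLeast_antitone {V : ℕ} {p : Fin V → X → ℝ} (hp : ∀ v x, 0 ≤ p v x)
    (A : Fin V → Finset X) : Antitone fun U => probAtLeast p U A := fun _ _ hU =>
  sum_le_sum_of_subset_of_nonneg (monotone_filter_right _ fun _ _ h => hU.trans h)
    fun _ _ _ => prod_nonneg fun v _ => hp v _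

theorem probAtLeast_succ {V : ℕ} (p : Fin (V + 1) → X → ℝ) (U : ℕ)
    (A : Fin (V + 1) → Finset X) :
    probAtLeast p U A =
      (∑ x ∈ A 0, p 0 x) * probAtLeast (fun v => p v.succ) (U - 1) (fun v => A v.succ) +
      (∑ x ∈ (A 0)ᶜ, p 0 x) * probAtLeast (fun v => p v.succ) U (fun v => A v.succ) := by
  have hcard (x : X) (r : Fin V → X) :
      #{v | (Fin.cons x r : Fin (V + 1) → X) v ∈ A v} =
        (if x ∈ A 0 then 1 else 0) + #{v | r v ∈ A v.succ} := by
    rw [Fin.card_filter_univ_succ']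
    simp
  rw [probAtLeast, sum_filter, ← (Fin.consEquiv fun _ => X).sum_comp, Fintype.sum_prod_type]
  simp only [Fin.consEquiv_apply, hcard, Fin.prod_univ_succ, Fin.cons_zero, Fin.cons_succ]
  rw [← sum_add_sum_compl (A 0), sum_mul, sum_mul]
  congr 1
  · refine sum_congr rfl fun x hx => ?_
    simp only [probAtLeast, sum_filter, mul_sum, mul_ite, mul_zero, hx, if_true]
    exact sum_congr rfl fun r _ => if_congr (by omega) rfl rfl
  · refine sum_congr rfl fun x hx => ?_
    simp only [probAtLeast, sum_filter, mul_sum, mul_ite, mul_zero, mem_compl.1 hx, if_false,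
      zero_add]

theorem probAtLeast_mono {V : ℕ} {p : Fin V → X → ℝ} (hp : ∀ v x, 0 ≤ p v x)
    {A B : Fin V → Finset X} (hAB : ∀ v, ∑ x ∈ A v, p v x ≤ ∑ x ∈ B v, p v x) (U : ℕ) :
    probAtLeast p U A ≤ probAtLeast p U B := by
  induction V generalizing U with
  | zero => simp [probAtLeast]
  | succ V ih =>
    rw [probAtLeast_succ, probAtLeast_succ]
    have hsucc := ih (fun v x => hp v.succ x) (fun v => hAB v.succ)
    have hB : probAtLeast (fun v => p v.succ) U (fun v => B v.succ) ≤
        probAtLeast (fun v => p v.succ) (U - 1) (fun v => B v.succ) :=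
      probAtLeast_antitone (fun v x => hp v.succ x) _ (Nat.sub_le U 1)
    have hcompl : ∑ x ∈ (A 0)ᶜ, p 0 x =
        ∑ x ∈ B 0, p 0 x + ∑ x ∈ (B 0)ᶜ, p 0 x - ∑ x ∈ A 0, p 0 x := by
      rw [sum_add_sum_compl, ← sum_add_sum_compl (A 0)]
      ring
    have h0 (C : Finset X) : 0 ≤ ∑ x ∈ C, p 0 x := sum_nonneg fun x _ => hp 0 x
    calc _ ≤ (∑ x ∈ A 0, p 0 x) * probAtLeast (fun v => p v.succ) (U - 1) (fun v => B v.succ) +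
          (∑ x ∈ (A 0)ᶜ, p 0 x) * probAtLeast (fun v => p v.succ) U (fun v => B v.succ) := by
          gcongr
          exacts [h0 _, hsucc _, h0 _, hsucc _]
      -- mass moved into the event at coordinate 0 now only needs `U - 1` further successes
      _ ≤ _ := by rw [hcompl]; linarith [mul_nonneg (sub_nonneg.2 (hAB 0)) (sub_nonneg.2 hB)]

end probAtLeast

theorem Gopt_stochastically_dominated_general
    {V M : ℕ} {X : Type*} [Fintype X] [DecidableEq X]
    (p : Fin V → X → ℝ) (hp : ∀ v w, 0 ≤ p v w)
    (Gv : Fin V → (X ≃ Fin M))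
    (hGv : ∀ v w w', p v w > p v w' → Gv v w < Gv v w')
    (S : Fin V × X ≃ Fin (V * M)) (U : ℕ) (hU1 : 1 ≤ U) (hUV : U ≤ V)
    (n : ℕ) :
    ∑ w ∈ Finset.univ.filter (fun w : Fin V → X => GS S U w ≤ n),
        ∏ v, p v (w v) ≤
      ∑ w ∈ Finset.univ.filter (fun w : Fin V → X => Gopt Gv U w ≤ n),
        ∏ v, p v (w v) := by
  have hopt (v : Fin V) :=
    sum_le_sum_filter_lt_of_card_le (hp v) (Gv v) (hGv v) (card_filter_NS_le S v n)
  calc _ ≤ probAtLeast p U fun v => {a | NS S v (S (v, a) + 1) ≤ n} := by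
        refine sum_le_sum_of_subset_of_nonneg (fun w hw => ?_)
          fun w _ _ => prod_nonneg fun v _ => hp v _
        rw [mem_filter] at hw ⊢
        simpa [← uminN_le_iff hU1 hUV] using (uminN_NS_le_GS S hU1 hUV w).trans hw.2
    _ ≤ probAtLeast p U fun v => {a | (Gv v a : ℕ) < n} := probAtLeast_mono hp hopt U
    _ = _ := by
        refine sum_congr (filter_congr fun w _ => ?_) fun _ _ => rfl
        simp only [Gopt, uminN_le_iff hU1 hUV, mem_filter, mem_univ, true_and,
          Nat.lt_iff_add_one_le]

/-- If each `Gv v` is a single-user optimal (most-likely-first)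
strategy for user `v`, then for independent users the random variable
`Gopt (U, V, W)` is stochastically dominated by the guesswork
`GS (U, V, W)` of every multi-user strategy `S`. -/
theorem Gopt_stochastically_dominated
    {V M : ℕ} {X : Type*} [Fintype X] [DecidableEq X]
    (hM : Fintype.card X = M)
    (p : Fin V → X → ℝ) (hp : ∀ v w, 0 ≤ p v w) (hp1 : ∀ v, ∑ w, p v w = 1)
    (Gv : Fin V → (X ≃ Fin M))
    (hGv : ∀ v w w', p v w > p v w' → Gv v w < Gv v w')
    (S : Fin V × X ≃ Fin (V * M)) (U : ℕ) (hU1 : 1 ≤ U) (hUV : U ≤ V)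
    (n : ℕ) :
    ∑ w ∈ Finset.univ.filter (fun w : Fin V → X => GS S U w ≤ n),
        ∏ v, p v (w v) ≤
      ∑ w ∈ Finset.univ.filter (fun w : Fin V → X => Gopt Gv U w ≤ n),
        ∏ v, p v (w v) :=
  Gopt_stochastically_dominated_general p hp Gv hGv S U hU1 hUV n
end

section
/- For any multi-user strategy S and any w = (w^(1),...,w^(V)), G_S(U,V,w) ≥ U-min(N_S(1,S(1,w^(1))), ..., N_S(V,S(V,w^(V)))). -/
open Finset

namespace List

theorem countP_take_add_countP_drop {α : Type*} (p : α → Bool) (l : List α) (i : ℕ) :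
    (l.take i).countP p + (l.drop i).countP p = l.countP p := by
  rw [← countP_append, take_append_drop]

variable {α : Type*} [LinearOrder α] {l : List α} {i : ℕ}

theorem Pairwise.lt_countP_le_getElem (hl : l.Pairwise (· ≤ ·)) (hi : i < l.length) :
    i < l.countP (· ≤ l[i]) := by
  have hmem : l[i] ∈ l.drop i := mem_drop_iff_getElem.2 ⟨0, by omega, rfl⟩
  have htake : (l.take i).countP (· ≤ l[i]) = i := by
    rw [countP_eq_length.2 fun a ha => by simpa using hl.rel_of_mem_take_of_mem_drop ha hmem,
      length_take_of_le hi.le]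
  have hdrop : 0 < (l.drop i).countP (· ≤ l[i]) := countP_pos_iff.2 ⟨l[i], hmem, by simp⟩
  rw [← countP_take_add_countP_drop _ l i]
  omega

theorem Pairwise.countP_lt_getElem_le (hl : l.Pairwise (· ≤ ·)) (hi : i < l.length) :
    l.countP (· < l[i]) ≤ i := by
  have hdrop : (l.drop i).countP (· < l[i]) = 0 := by
    refine countP_eq_zero.2 fun b hb => ?_
    obtain ⟨j, hj, rfl⟩ := mem_drop_iff_getElem.1 hb
    simpa using hl.rel_get_of_le (a := ⟨i, hi⟩) (b := ⟨i + j, by omega⟩) (by simp [Fin.le_def])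
  rw [← countP_take_add_countP_drop _ l i, hdrop]
  exact countP_le_length.trans (length_take_le _ _)

end List

theorem Finset.card_filter_eq_countP_sort {ι α : Type*} [LinearOrder α] (s : Finset ι)
    (x : ι → α) (p : α → Prop) [DecidablePred p] :
    #{i ∈ s | p (x i)} = ((s.val.map x).sort (· ≤ ·)).countP (p ·) := by
  rw [← Multiset.coe_countP, Multiset.sort_eq, Multiset.countP_map]
  rfl

section uminN

variable {V : ℕ}

theorem length_sort_map_univ (x : Fin V → ℕ) : ((univ.val.map x).sort (· ≤ ·)).length = V := by
  simp

theorem le_card_filter_le_uminN {U : ℕ} (hUV : U ≤ V) (x : Fin V → ℕ) :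
    U ≤ #{v | x v ≤ uminN U x} := by
  rcases Nat.eq_zero_or_pos U with rfl | hU
  · exact Nat.zero_le _
  have hi : U - 1 < ((univ.val.map x).sort (· ≤ ·)).length := by
    rw [length_sort_map_univ]; omega
  rw [card_filter_eq_countP_sort univ x (· ≤ uminN U x), uminN, List.getD_eq_getElem _ _ hi]
  have := (Multiset.pairwise_sort _ _).lt_countP_le_getElem hi
  omega

theorem card_filter_lt_uminN_le (U : ℕ) (x : Fin V → ℕ) : #{v | x v < uminN U x} ≤ U - 1 := by
  by_cases hi : U - 1 < ((univ.val.map x).sort (· ≤ ·)).length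
  · rw [card_filter_eq_countP_sort univ x (· < uminN U x), uminN, List.getD_eq_getElem _ _ hi]
    exact (Multiset.pairwise_sort _ _).countP_lt_getElem_le hi
  · rw [length_sort_map_univ] at hi
    exact (card_le_univ _).trans (by rw [Fintype.card_fin]; omega)

theorem exists_mem_uminN_le {U : ℕ} (hU : 1 ≤ U) (x : Fin V → ℕ) {A : Finset (Fin V)}
    (hA : U ≤ #A) : ∃ v ∈ A, uminN U x ≤ x v := by
  by_contra! h
  have hsub : A ⊆ ({v | x v < uminN U x} : Finset (Fin V)) := fun v hv =>
    mem_filter.2 ⟨mem_univ v, h v hv⟩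
  have := (card_le_card hsub).trans (card_filter_lt_uminN_le U x)
  omega

end uminN

theorem GS_ge_umin_NS_general
    {V M : ℕ} {X : Type*} [Fintype X] [DecidableEq X]
    (S : Fin V × X ≃ Fin (V * M)) (U : ℕ) (hU1 : 1 ≤ U) (hUV : U ≤ V)
    (w : Fin V → X) :
    uminN U (fun v => NS S v (((S (v, w v)) : ℕ) + 1)) ≤ GS S U w := by
  obtain ⟨v, hv, hle⟩ := exists_mem_uminN_le hU1 _ (le_card_filter_le_uminN hUV _)
  have hpos : (S (v, w v) : ℕ) + 1 ≤ TT S U w := (mem_filter.1 hv).2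
  calc uminN U (fun v => NS S v (((S (v, w v)) : ℕ) + 1))
      ≤ NS S v ((S (v, w v) : ℕ) + 1) := hle
    _ = NS S v (min ((S (v, w v) : ℕ) + 1) (TT S U w)) := by rw [min_eq_left hpos]
    _ ≤ GS S U w := by
        unfold GS
        apply single_le_sum_of_canonicallyOrdered (mem_univ v)

/-- For any multi-user strategy `S` and any vector of strings
`w`, `G_S(U,V,w) ≥ U-min(N_S(1,S(1,w⁽¹⁾)),…,N_S(V,S(V,w⁽ⱽ⁾)))`. -/
theorem GS_ge_umin_NS
    {V M : ℕ} {X : Type*} [Fintype X] [DecidableEq X]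
    (hM : Fintype.card X = M)
    (S : Fin V × X ≃ Fin (V * M)) (U : ℕ) (hU1 : 1 ≤ U) (hUV : U ≤ V)
    (w : Fin V → X) :
    uminN U (fun v => NS S v (((S (v, w v)) : ℕ) + 1)) ≤ GS S U w :=
  GS_ge_umin_NS_general S U hU1 hUV w
end

section
/- Let Λ : ℝ → ℝ be convex with Λ(0) = 0. Then the sequence n ↦ (n+1)Λ(1/(n+1)) − (n+2)Λ(1/(n+2)) is nonnegative and nonincreasing in n ∈ ℕ. Equivalently, n ↦ (n+1)Λ(1/(n+1)) is nonincreasing and convex as a function of n. -/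
/-!
Write `g x = x * Λ (1 / x)` for `x > 0`. This is the perspective of `Λ`, hence convex, which
gives the second claim at the midpoint `n + 2` of `n + 1` and `n + 3`. Since `Λ 0 = 0`, `g x` is
the slope of the chord of `Λ` from `0` to `1 / x`, which shrinks as `x` grows; this gives the
first claim.
-/

open Set

theorem ConvexOn.convexOn_mul_one_div {Λ : ℝ → ℝ} (hΛ : ConvexOn ℝ univ Λ) :
    ConvexOn ℝ (Ioi 0) (fun x => x * Λ (1 / x)) := by
  refine ⟨convex_Ioi 0, fun x (hx : 0 < x) y (hy : 0 < y) a b ha hb hab => ?_⟩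
  have hz : 0 < a * x + b * y := by
    rcases ha.eq_or_lt with rfl | ha
    · rw [zero_add] at hab; subst hab; simpa using hy
    · positivity
  set z := a * x + b * y
  -- `1 / z` is the convex combination of `1 / x` and `1 / y` with weights `a x / z` and `b y / z`.
  have hcomb : a * x / z * (1 / x) + b * y / z * (1 / y) = 1 / z := by
    field_simp
    exact hab
  have hweights : a * x / z + b * y / z = 1 := by
    rw [← add_div, div_self hz.ne']
  have key := hΛ.2 (mem_univ (1 / x)) (mem_univ (1 / y)) (by positivity) (by positivity) hweights
  simp only [smul_eq_mul, hcomb] at key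
  calc z * Λ (1 / z)
      ≤ z * (a * x / z * Λ (1 / x) + b * y / z * Λ (1 / y)) := by gcongr
    _ = a * (x * Λ (1 / x)) + b * (y * Λ (1 / y)) := by field_simp

theorem ConvexOn.antitoneOn_mul_one_div {Λ : ℝ → ℝ} (hΛ : ConvexOn ℝ univ Λ)
    (h0 : Λ 0 = 0) :
    AntitoneOn (fun x => x * Λ (1 / x)) (Ioi 0) := by
  intro x (hx : 0 < x) y (hy : 0 < y) hxy
  have hslope := hΛ.secant_mono (mem_univ 0) (mem_univ (1 / y)) (mem_univ (1 / x))
    (by positivity) (by positivity) (one_div_le_one_div_of_le hx hxy)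
  simp only [h0, sub_zero, div_div_eq_mul_div, div_one] at hslope
  simpa only [mul_comm] using hslope

/-- For convex `Λ` with `Λ(0) = 0`, the sequence
`f n = (n+1)·Λ(1/(n+1))` is nonincreasing and the difference sequence
`f n − f (n+1)` is nonnegative and nonincreasing (so `f` is convex in `n`):
the law of diminishing returns. -/
theorem diminishing_returns (Λ : ℝ → ℝ) (hΛ : ConvexOn ℝ Set.univ Λ)
    (h0 : Λ 0 = 0) :
    (∀ n : ℕ, 0 ≤ ((n : ℝ) + 1) * Λ (1 / ((n : ℝ) + 1)) -
        ((n : ℝ) + 2) * Λ (1 / ((n : ℝ) + 2))) ∧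
    (∀ n : ℕ, ((n : ℝ) + 2) * Λ (1 / ((n : ℝ) + 2)) -
        ((n : ℝ) + 3) * Λ (1 / ((n : ℝ) + 3)) ≤
      ((n : ℝ) + 1) * Λ (1 / ((n : ℝ) + 1)) -
        ((n : ℝ) + 2) * Λ (1 / ((n : ℝ) + 2))) := by
  have hpos (n : ℕ) (k : ℝ) (hk : 0 < k) : (n : ℝ) + k ∈ Ioi 0 := mem_Ioi.2 (by positivity)
  refine ⟨fun n => ?_, fun n => ?_⟩
  · have hanti :=
      hΛ.antitoneOn_mul_one_div h0 (hpos n 1 one_pos) (hpos n 2 two_pos) (by linarith)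
    linarith
  · have hconv := hΛ.convexOn_mul_one_div.2 (hpos n 1 one_pos) (hpos n 3 three_pos)
      (by norm_num : (0 : ℝ) ≤ 1 / 2) (by norm_num : (0 : ℝ) ≤ 1 / 2) (by norm_num)
    have hmid : 1 / 2 * ((n : ℝ) + 1) + 1 / 2 * ((n : ℝ) + 3) = (n : ℝ) + 2 := by ring
    simp only [smul_eq_mul, hmid] at hconv
    linarith
end

section
/- Let Λ : ℝ → ℝ be convex with Λ(0) = 0, let Λ* be its Legendre–Fenchel transform, h a point with Λ*(h) = 0, and define Ψ(x) = UΛ*(x) for x ≤ h and Ψ(x) = (V−U+1)Λ*(x) for x ≥ h. Then the Legendre–Fenchel transform of Ψ satisfies Ψ*(α) = U·Λ(α/U) for α ≤ 0 and Ψ*(α) = (V−U+1)·Λ(α/(V−U+1)) for α ≥ 0. -/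
/-! Write `β = α / c` with `c = U` for `α ≤ 0` and `c = V - U + 1` for `α ≥ 0`. Fenchel–Young gives
`αx - cΛ*(x) ≤ cΛ(β)` for every `x`, with equality at `x = Λ'(β)`; monotonicity of `Λ'` puts this
point on the side of `h` where `Ψ = cΛ*`. On the other side `αx ≤ αh ≤ cΛ(β)` by the tangent line of
`Λ` at `0`, while `Ψ ≥ 0` there because `Λ* ≥ 0`. -/

open Set

theorem ConvexOn.add_deriv_mul_sub_le {S : Set ℝ} {f : ℝ → ℝ} (hf : ConvexOn ℝ S f) {x y : ℝ}
    (hx : x ∈ S) (hy : y ∈ S) (hd : DifferentiableAt ℝ f x) :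
    f x + deriv f x * (y - x) ≤ f y := by
  rcases lt_trichotomy x y with hxy | rfl | hyx
  · have hslope := hf.deriv_le_slope hx hy hxy hd
    rw [slope_def_field, le_div_iff₀ (sub_pos.2 hxy)] at hslope
    linarith
  · simp
  · have hslope := hf.slope_le_deriv hy hx hyx hd
    rw [slope_def_field, div_le_iff₀ (sub_pos.2 hyx)] at hslope
    linarith

def IsLegendreTransform (Λ Λstar : ℝ → ℝ) : Prop :=
  ∀ x, IsLUB {y : ℝ | ∃ α : ℝ, y = α * x - Λ α} (Λstar x)

namespace IsLegendreTransform

variable {Λ Λstar : ℝ → ℝ}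

theorem mul_sub_le (hΛ : IsLegendreTransform Λ Λstar) (β x : ℝ) : β * x - Λ β ≤ Λstar x :=
  (hΛ x).1 ⟨β, rfl⟩

theorem nonneg (hΛ : IsLegendreTransform Λ Λstar) (h0 : Λ 0 = 0) (x : ℝ) : 0 ≤ Λstar x := by
  simpa [h0] using hΛ.mul_sub_le 0 x

theorem apply_deriv (hΛ : IsLegendreTransform Λ Λstar) (hconv : ConvexOn ℝ univ Λ) {β : ℝ}
    (hd : DifferentiableAt ℝ Λ β) : Λstar (deriv Λ β) = β * deriv Λ β - Λ β := by
  refine le_antisymm ((hΛ _).2 ?_) (hΛ.mul_sub_le β _)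
  rintro _ ⟨γ, rfl⟩
  have := hconv.add_deriv_mul_sub_le (mem_univ β) (mem_univ γ) hd
  linarith

theorem isGreatest_mul_sub {Ψ : ℝ → ℝ} (hΛ : IsLegendreTransform Λ Λstar)
    (hconv : ConvexOn ℝ univ Λ) (h0 : Λ 0 = 0) {α c : ℝ} (hc : 0 < c)
    (hd0 : DifferentiableAt ℝ Λ 0) (hdα : DifferentiableAt ℝ Λ (α / c)) (hΨ0 : ∀ x, 0 ≤ Ψ x)
    (hΨx₀ : Ψ (deriv Λ (α / c)) = c * Λstar (deriv Λ (α / c)))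
    (hΨ : ∀ x, Ψ x = c * Λstar x ∨ α * x ≤ α * deriv Λ 0) :
    IsGreatest {y : ℝ | ∃ x : ℝ, y = α * x - Ψ x} (c * Λ (α / c)) := by
  have hα : α = c * (α / c) := by field_simp
  refine ⟨⟨deriv Λ (α / c), ?_⟩, ?_⟩
  · rw [hΨx₀, hΛ.apply_deriv hconv hdα]
    nth_rewrite 2 [hα]
    ring
  rintro _ ⟨x, rfl⟩
  rcases hΨ x with hΨx | hαx
  · have := mul_le_mul_of_nonneg_left (hΛ.mul_sub_le (α / c) x) hc.le
    rw [hΨx]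
    nth_rewrite 1 [hα]
    linarith
  · have tangent := hconv.add_deriv_mul_sub_le (mem_univ 0) (mem_univ (α / c)) hd0
    have := mul_le_mul_of_nonneg_left tangent hc.le
    rw [h0] at this
    nth_rewrite 2 [hα] at hαx
    linarith [hΨ0 x]

end IsLegendreTransform

theorem multiuser_sCGF_identical_general
    (Λ : ℝ → ℝ) (hconv : ConvexOn ℝ Set.univ Λ) (h0 : Λ 0 = 0)
    (hdiff : Differentiable ℝ Λ) (h : ℝ) (hderiv : deriv Λ 0 = h)
    (Λstar : ℝ → ℝ)
    (hΛstar : ∀ x, IsLUB {y : ℝ | ∃ α : ℝ, y = α * x - Λ α} (Λstar x))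
    (U V : ℕ) (hU1 : 1 ≤ U) (hUV : U ≤ V)
    (Ψ : ℝ → ℝ)
    (hΨle : ∀ x ≤ h, Ψ x = (U : ℝ) * Λstar x)
    (hΨge : ∀ x, h ≤ x → Ψ x = ((V : ℝ) - U + 1) * Λstar x) :
    (∀ α : ℝ, α ≤ 0 →
      IsLUB {y : ℝ | ∃ x : ℝ, y = α * x - Ψ x} ((U : ℝ) * Λ (α / U))) ∧
    (∀ α : ℝ, 0 ≤ α →
      IsLUB {y : ℝ | ∃ x : ℝ, y = α * x - Ψ x}
        (((V : ℝ) - U + 1) * Λ (α / ((V : ℝ) - U + 1)))) := by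
  subst hderiv
  have hΛ : IsLegendreTransform Λ Λstar := hΛstar
  have hU : (0 : ℝ) < U := by exact_mod_cast hU1
  have hW : (0 : ℝ) < (V : ℝ) - U + 1 := by
    have : (U : ℝ) ≤ V := by exact_mod_cast hUV
    linarith
  have hΨ0 (x : ℝ) : 0 ≤ Ψ x := by
    rcases le_total x (deriv Λ 0) with hx | hx
    · rw [hΨle x hx]; exact mul_nonneg hU.le (hΛ.nonneg h0 x)
    · rw [hΨge x hx]; exact mul_nonneg hW.le (hΛ.nonneg h0 x)
  have hmono : Monotone (deriv Λ) :=
    monotoneOn_univ.1 (hconv.monotoneOn_deriv fun x _ => hdiff x)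
  refine ⟨fun α hα => ?_, fun α hα => ?_⟩
  · refine (hΛ.isGreatest_mul_sub hconv h0 hU (hdiff 0) (hdiff _) hΨ0
      (hΨle _ (hmono (div_nonpos_of_nonpos_of_nonneg hα hU.le))) fun x => ?_).isLUB
    exact (le_total x _).imp (hΨle x) fun hx => mul_le_mul_of_nonpos_left hx hα
  · refine (hΛ.isGreatest_mul_sub hconv h0 hW (hdiff 0) (hdiff _) hΨ0
      (hΨge _ (hmono (div_nonneg hα hW.le))) fun x => ?_).isLUB
    exact ((le_total x _).imp (fun hx => mul_le_mul_of_nonneg_left hx hα) (hΨge x)).symm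

/-- Let `Λ : ℝ → ℝ` be convex and differentiable with
`Λ(0) = 0` and `Λ'(0) = h`, and let `Λ*` be its Legendre–Fenchel transform
(`Λstar x` is the least upper bound of `{αx − Λ(α) : α ∈ ℝ}`), so that
`Λ*(h) = 0`.  For `1 ≤ U ≤ V` define
`Ψ(x) = U·Λ*(x)` for `x ≤ h` and `Ψ(x) = (V−U+1)·Λ*(x)` for `x ≥ h`.
Then the Legendre–Fenchel transform of `Ψ` satisfies
`Ψ*(α) = U·Λ(α/U)` for `α ≤ 0` and `Ψ*(α) = (V−U+1)·Λ(α/(V−U+1))`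
for `α ≥ 0`. -/
theorem multiuser_sCGF_identical
    (Λ : ℝ → ℝ) (hconv : ConvexOn ℝ Set.univ Λ) (h0 : Λ 0 = 0)
    (hdiff : Differentiable ℝ Λ) (h : ℝ) (hderiv : deriv Λ 0 = h)
    (Λstar : ℝ → ℝ)
    (hΛstar : ∀ x, IsLUB {y : ℝ | ∃ α : ℝ, y = α * x - Λ α} (Λstar x))
    (hzero : Λstar h = 0)
    (U V : ℕ) (hU1 : 1 ≤ U) (hUV : U ≤ V)
    (Ψ : ℝ → ℝ)
    (hΨle : ∀ x ≤ h, Ψ x = (U : ℝ) * Λstar x)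
    (hΨge : ∀ x, h ≤ x → Ψ x = ((V : ℝ) - U + 1) * Λstar x) :
    (∀ α : ℝ, α ≤ 0 →
      IsLUB {y : ℝ | ∃ x : ℝ, y = α * x - Ψ x} ((U : ℝ) * Λ (α / U))) ∧
    (∀ α : ℝ, 0 ≤ α →
      IsLUB {y : ℝ | ∃ x : ℝ, y = α * x - Ψ x}
        (((V : ℝ) - U + 1) * Λ (α / ((V : ℝ) - U + 1)))) :=
  multiuser_sCGF_identical_general Λ hconv h0 hdiff h hderiv Λstar hΛstar U V hU1 hUV Ψ hΨle hΨge
end
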